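/- The gap between the finite-dimensional and infinite-dimensional Bayes-type classifiers is bounded by conditional-expectation differences: ℙ{Γ^{B,d}(X^(d,δ)) ≠ Y} − ℙ{Γ^B(X^(δ)) ≠ Y} ≤ Σ_{k=1}^M 𝔼| 𝔼[(2Y−1)·1{δ=k} | X^(k)] − 𝔼[(2Y−1)·1{δ=k} | X^(d,k)] |. -/

import Mathlib

/-!
For a `{0,1}`-valued rule `g` one has `1{g ≠ Y} = Y + (1 - 2Y) g`, so the error gap of two
rules is `𝔼[(2Y - 1)(g - g')]`. For the plug-in rules this splits over the patterns `δ = k`,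
and the `k`-th term is
`𝔼[(2Y - 1) 1{δ = k}; φ_k > 0] - 𝔼[(2Y - 1) 1{δ = k}; φ_{d,k} > 0]`.
Since `{φ_k > 0}` is `σ(X^(k))`-measurable, conditioning turns the first expectation into
`𝔼[φ_k⁺]`, and likewise the second into `𝔼[φ_{d,k}⁺]`; finally `|a⁺ - b⁺| ≤ |a - b|`.
-/

open MeasureTheory ProbabilityTheory Filter

noncomputable section

/-- The sequence space `ℓ₂` of square-summable real sequences. -/
abbrev ell2 : Type := lp (fun _ : ℕ => ℝ) 2

noncomputable instance : MeasurableSpace ell2 := borel _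
instance : BorelSpace ell2 := ⟨rfl⟩

lemma measurable_ell2_truncation (d : ℕ) :
    Measurable (fun (x : ell2) (j : Fin d) => x (j : ℕ)) :=
  (continuous_pi fun j : Fin d => (continuous_apply (j : ℕ)).comp
    lp.uniformContinuous_coe.continuous).measurable

section CondExp

variable {Ω : Type*} {m m₁ m₂ m₀ : MeasurableSpace Ω} {μ : Measure Ω} [IsFiniteMeasure μ]
  {f : Ω → ℝ}

lemma setIntegral_pos_condExp_eq_integral_max (hm : m ≤ m₀) (hf : Integrable f μ) :
    ∫ ω in {ω | 0 < μ[f|m] ω}, f ω ∂μ = ∫ ω, max (μ[f|m] ω) 0 ∂μ := by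
  have hpos : MeasurableSet[m] {ω | 0 < μ[f|m] ω} :=
    measurableSet_lt measurable_const stronglyMeasurable_condExp.measurable
  rw [← setIntegral_condExp hm hf hpos, ← integral_indicator (hm _ hpos)]
  refine integral_congr_ae (ae_of_all _ fun ω => ?_)
  by_cases h : 0 < μ[f|m] ω
  · simp [h, h.le]
  · simp [h, not_lt.mp h]

lemma setIntegral_pos_condExp_sub_le (hm₁ : m₁ ≤ m₀) (hm₂ : m₂ ≤ m₀) (hf : Integrable f μ) :
    ∫ ω in {ω | 0 < μ[f|m₁] ω}, f ω ∂μ - ∫ ω in {ω | 0 < μ[f|m₂] ω}, f ω ∂μ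
      ≤ ∫ ω, |μ[f|m₁] ω - μ[f|m₂] ω| ∂μ := by
  have h₁ : Integrable (μ[f|m₁]) μ := integrable_condExp
  have h₂ : Integrable (μ[f|m₂]) μ := integrable_condExp
  rw [setIntegral_pos_condExp_eq_integral_max hm₁ hf,
    setIntegral_pos_condExp_eq_integral_max hm₂ hf, ← integral_sub h₁.pos_part h₂.pos_part]
  exact integral_mono (h₁.pos_part.sub h₂.pos_part) (h₁.sub h₂).abs
    fun ω => (le_abs_self _).trans (abs_max_sub_max_le_abs _ _ _)

end CondExp

section PlugIn

variable {Ω ι : Type*} [Fintype ι] [DecidableEq ι]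

-- `Γ^B = plugInClassifier δ φ` and `Γ^{B,d} = plugInClassifier δ φd`.
def plugInClassifier (δ : Ω → ι) (s : ι → Ω → ℝ) (ω : Ω) : ℝ :=
  ∑ k, (if δ ω = k then (1 : ℝ) else 0) * (if 0 < s k ω then (1 : ℝ) else 0)

lemma plugInClassifier_apply (δ : Ω → ι) (s : ι → Ω → ℝ) (ω : Ω) :
    plugInClassifier δ s ω = if 0 < s (δ ω) ω then 1 else 0 := by
  simp only [plugInClassifier, ite_mul, one_mul, zero_mul, Finset.sum_ite_eq, Finset.mem_univ,
    if_true]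

lemma plugInClassifier_eq_zero_or_eq_one (δ : Ω → ι) (s : ι → Ω → ℝ) (ω : Ω) :
    plugInClassifier δ s ω = 0 ∨ plugInClassifier δ s ω = 1 := by
  rw [plugInClassifier_apply]
  split_ifs <;> simp

variable [MeasurableSpace Ω] [MeasurableSpace ι] [MeasurableSingletonClass ι] {δ : Ω → ι}
  {s : ι → Ω → ℝ}

lemma measurable_plugInClassifier (hδ : Measurable δ) (hs : ∀ k, Measurable (s k)) :
    Measurable (plugInClassifier δ s) :=
  Finset.measurable_sum _ fun k _ =>
    (Measurable.ite (hδ (measurableSet_singleton k)) measurable_const measurable_const).mul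
      (Measurable.ite (measurableSet_lt measurable_const (hs k)) measurable_const
        measurable_const)

lemma integral_mul_plugInClassifier {μ : Measure Ω} {c : Ω → ℝ} (hc : Integrable c μ)
    (hδ : Measurable δ) (hs : ∀ k, Measurable (s k)) :
    ∫ ω, c ω * plugInClassifier δ s ω ∂μ
      = ∑ k, ∫ ω in {ω | 0 < s k ω}, c ω * (if δ ω = k then 1 else 0) ∂μ := by
  have hpos : ∀ k, MeasurableSet {ω | 0 < s k ω} :=
    fun k => measurableSet_lt measurable_const (hs k)
  have hck : ∀ k, Integrable (fun ω => c ω * if δ ω = k then 1 else 0) μ := fun k => by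
    refine (hc.indicator (hδ (measurableSet_singleton k))).congr (ae_of_all _ fun ω => ?_)
    by_cases h : δ ω = k <;> simp [h]
  have hsplit : (fun ω => c ω * plugInClassifier δ s ω)
      = fun ω => ∑ k, {ω | 0 < s k ω}.indicator (fun ω => c ω * if δ ω = k then 1 else 0) ω := by
    ext ω
    simp only [plugInClassifier, Finset.mul_sum, Set.indicator_apply, Set.mem_ofPred_eq]
    refine Finset.sum_congr rfl fun k _ => ?_
    split_ifs <;> ring
  rw [hsplit, integral_finsetSum _ fun k _ => (hck k).indicator (hpos k)]
  exact Finset.sum_congr rfl fun k _ => integral_indicator (hpos k)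

end PlugIn

section BinaryError

variable {Ω : Type*} [MeasurableSpace Ω] {μ : Measure Ω} [IsFiniteMeasure μ]

lemma indicator_ne_sub_indicator_ne {y a b : ℝ} (hy : y = 0 ∨ y = 1) (ha : a = 0 ∨ a = 1)
    (hb : b = 0 ∨ b = 1) :
    (if a ≠ y then (1 : ℝ) else 0) - (if b ≠ y then (1 : ℝ) else 0)
      = (2 * y - 1) * b - (2 * y - 1) * a := by
  rcases hy with rfl | rfl <;> rcases ha with rfl | rfl <;> rcases hb with rfl | rfl <;> norm_num

lemma integrable_two_mul_sub_one_mul {Y g : Ω → ℝ} (hY : Measurable Y) (hg : Measurable g)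
    (hY01 : ∀ ω, Y ω = 0 ∨ Y ω = 1) (hg01 : ∀ ω, g ω = 0 ∨ g ω = 1) :
    Integrable (fun ω => (2 * Y ω - 1) * g ω) μ := by
  have hmeas : Measurable fun ω => (2 * Y ω - 1) * g ω :=
    ((measurable_const.mul hY).sub measurable_const).mul hg
  refine .of_bound hmeas.aestronglyMeasurable 1 (ae_of_all _ fun ω => ?_)
  rcases hY01 ω with h | h <;> rcases hg01 ω with h' | h' <;> norm_num [h, h']

lemma measureReal_ne_sub_measureReal_ne {Y g h : Ω → ℝ} (hY : Measurable Y) (hg : Measurable g)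
    (hh : Measurable h) (hY01 : ∀ ω, Y ω = 0 ∨ Y ω = 1) (hg01 : ∀ ω, g ω = 0 ∨ g ω = 1)
    (hh01 : ∀ ω, h ω = 0 ∨ h ω = 1) :
    μ.real {ω | g ω ≠ Y ω} - μ.real {ω | h ω ≠ Y ω}
      = ∫ ω, (2 * Y ω - 1) * h ω ∂μ - ∫ ω, (2 * Y ω - 1) * g ω ∂μ := by
  have hgY : MeasurableSet {ω | g ω ≠ Y ω} := (measurableSet_eq_fun hg hY).compl
  have hhY : MeasurableSet {ω | h ω ≠ Y ω} := (measurableSet_eq_fun hh hY).compl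
  rw [← integral_indicator_one hgY, ← integral_indicator_one hhY,
    ← integral_sub ((integrable_const 1).indicator hgY) ((integrable_const 1).indicator hhY),
    ← integral_sub (integrable_two_mul_sub_one_mul hY hh hY01 hh01)
      (integrable_two_mul_sub_one_mul hY hg hY01 hg01)]
  refine integral_congr_ae (ae_of_all _ fun ω => ?_)
  simpa only [Set.indicator_apply, Set.mem_ofPred_eq, Pi.one_apply]
    using indicator_ne_sub_indicator_ne (hY01 ω) (hg01 ω) (hh01 ω)

end BinaryError

theorem finite_dim_bayes_error_gap_bound_general
    {Ω : Type} [MeasurableSpace Ω] (P : Measure Ω) [IsProbabilityMeasure P]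
    (M : ℕ)
    (Y : Ω → ℝ) (hYmeas : Measurable Y) (hY01 : ∀ ω, Y ω = 0 ∨ Y ω = 1)
    (δ : Ω → Fin M) (hδ : Measurable δ)
    (X : Fin M → Ω → ell2) (hX : ∀ k, Measurable (X k))
    (d : ℕ)
    (Xd : Fin M → Ω → (Fin d → ℝ))
    (hXd : ∀ k ω, Xd k ω = fun j : Fin d => X k ω (j : ℕ))
    (φ : Fin M → Ω → ℝ)
    (hφ : ∀ k, φ k =
      P[(fun ω => (2 * Y ω - 1) * (if δ ω = k then (1:ℝ) else 0)) |
        MeasurableSpace.comap (X k) inferInstance])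
    (φd : Fin M → Ω → ℝ)
    (hφd : ∀ k, φd k =
      P[(fun ω => (2 * Y ω - 1) * (if δ ω = k then (1:ℝ) else 0)) |
        MeasurableSpace.comap (Xd k) inferInstance]) :
    (P {ω | (∑ k, (if δ ω = k then (1:ℝ) else 0) * (if 0 < φd k ω then (1:ℝ) else 0)) ≠ Y ω}).toReal
        - (P {ω | (∑ k, (if δ ω = k then (1:ℝ) else 0) * (if 0 < φ k ω then (1:ℝ) else 0)) ≠ Y ω}).toReal
      ≤ ∑ k, ∫ ω, |φ k ω - φd k ω| ∂P := by
  have hmX : ∀ k, MeasurableSpace.comap (X k) inferInstance ≤ ‹MeasurableSpace Ω› :=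
    fun k => (hX k).comap_le
  have hmXd : ∀ k, MeasurableSpace.comap (Xd k) inferInstance ≤ ‹MeasurableSpace Ω› := by
    intro k
    rw [show Xd k = _ from funext (hXd k)]
    exact ((measurable_ell2_truncation d).comp (hX k)).comap_le
  have hφm : ∀ k, Measurable (φ k) := fun k =>
    hφ k ▸ (stronglyMeasurable_condExp.mono (hmX k)).measurable
  have hφdm : ∀ k, Measurable (φd k) := fun k =>
    hφd k ▸ (stronglyMeasurable_condExp.mono (hmXd k)).measurable
  have hc : Integrable (fun ω => 2 * Y ω - 1) P :=
    .of_bound ((measurable_const.mul hYmeas).sub measurable_const).aestronglyMeasurable 1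
      (ae_of_all _ fun ω => by rcases hY01 ω with h | h <;> norm_num [h])
  have hf : ∀ k, Integrable (fun ω => (2 * Y ω - 1) * (if δ ω = k then (1:ℝ) else 0)) P :=
    fun k => integrable_two_mul_sub_one_mul hYmeas
      (Measurable.ite (hδ (measurableSet_singleton k)) measurable_const measurable_const) hY01
      fun ω => by split_ifs <;> simp
  calc _ = ∫ ω, (2 * Y ω - 1) * plugInClassifier δ φ ω ∂P
          - ∫ ω, (2 * Y ω - 1) * plugInClassifier δ φd ω ∂P :=
        measureReal_ne_sub_measureReal_ne hYmeas (measurable_plugInClassifier hδ hφdm)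
          (measurable_plugInClassifier hδ hφm) hY01 (plugInClassifier_eq_zero_or_eq_one δ φd)
          (plugInClassifier_eq_zero_or_eq_one δ φ)
    _ = ∑ k, (∫ ω in {ω | 0 < φ k ω}, (2 * Y ω - 1) * (if δ ω = k then 1 else 0) ∂P
          - ∫ ω in {ω | 0 < φd k ω}, (2 * Y ω - 1) * (if δ ω = k then 1 else 0) ∂P) := by
        rw [integral_mul_plugInClassifier hc hδ hφm, integral_mul_plugInClassifier hc hδ hφdm,
          Finset.sum_sub_distrib]
    _ ≤ ∑ k, ∫ ω, |φ k ω - φd k ω| ∂P := Finset.sum_le_sum fun k _ => by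
        rw [hφ k, hφd k]
        exact setIntegral_pos_condExp_sub_le (hmX k) (hmXd k) (hf k)

/-- The gap between the finite-dimensional and infinite-dimensional
Bayes-type classifiers is bounded by the conditional-expectation differences:
`ℙ{Γ^{B,d}(X^(d,δ)) ≠ Y} − ℙ{Γ^B(X^(δ)) ≠ Y}
  ≤ Σ_k 𝔼|𝔼[(2Y−1)1{δ=k} | X^(k)] − 𝔼[(2Y−1)1{δ=k} | X^(d,k)]|`. -/
theorem finite_dim_bayes_error_gap_bound
    {Ω : Type} [MeasurableSpace Ω] (P : Measure Ω) [IsProbabilityMeasure P]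
    (M : ℕ) (hM : 1 ≤ M)
    (Y : Ω → ℝ) (hYmeas : Measurable Y) (hY01 : ∀ ω, Y ω = 0 ∨ Y ω = 1)
    (δ : Ω → Fin M) (hδ : Measurable δ)
    (X : Fin M → Ω → ell2) (hX : ∀ k, Measurable (X k))
    (d : ℕ) (hd : 1 ≤ d)
    (Xd : Fin M → Ω → (Fin d → ℝ))
    (hXd : ∀ k ω, Xd k ω = fun j : Fin d => X k ω (j : ℕ))
    (φ : Fin M → Ω → ℝ)
    (hφ : ∀ k, φ k =
      P[(fun ω => (2 * Y ω - 1) * (if δ ω = k then (1:ℝ) else 0)) |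
        MeasurableSpace.comap (X k) inferInstance])
    (φd : Fin M → Ω → ℝ)
    (hφd : ∀ k, φd k =
      P[(fun ω => (2 * Y ω - 1) * (if δ ω = k then (1:ℝ) else 0)) |
        MeasurableSpace.comap (Xd k) inferInstance]) :
    (P {ω | (∑ k, (if δ ω = k then (1:ℝ) else 0) * (if 0 < φd k ω then (1:ℝ) else 0)) ≠ Y ω}).toReal
        - (P {ω | (∑ k, (if δ ω = k then (1:ℝ) else 0) * (if 0 < φ k ω then (1:ℝ) else 0)) ≠ Y ω}).toReal
      ≤ ∑ k, ∫ ω, |φ k ω - φd k ω| ∂P :=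
  finite_dim_bayes_error_gap_bound_general P M Y hYmeas hY01 δ hδ X hX d Xd hXd φ hφ φd hφd
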